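/- arXiv:2501.14043 — 2 statements merged into one kernel-verified Lean document; each statement's English description precedes it below -/
import Mathlib

section
/- Let d ≥ 2, let γ⁺, γ⁻ ≥ 0 satisfy γ⁺ + γ⁻ ≥ 1 and γ⁻ − γ⁺ = d − 2, and let u(r) = a·r^{γ⁺} + b·r^{−γ⁻} for real constants a, b. Then for every μ > 1 there is a constant C = C(μ, d) (independent of γ⁺, γ⁻) such that for all R > 0: |a|²·R^{2γ⁺} ≤ C·μ^{−2γ⁺}·R^{−d}·∫_R^{μ³R} |u(r)|²·r^{d−1} dr and |b|²·R^{−2γ⁻} ≤ C·μ^{4γ⁻}·R^{−d}·∫_R^{μ³R} |u(r)|²·r^{d−1} dr. -/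
/-!
The substitution `t = r ^ s`, `s = γ⁺ + γ⁻`, turns the radial integral into
`s⁻¹ ∫ (a t + b)² t ^ (2 / s - 2) dt` over `[R ^ s, (μ³ R) ^ s]`: the square of an affine function
against a weight `t ^ e` with `-2 ≤ e ≤ 0`. Bounding the weight below by its value at the right end
of the whole window (for `a`) or of the shorter window `[R ^ s, μ³ R ^ s]` (for `b`) reduces both
estimates to the elementary lower bounds of `∫ (a t + b)²` through the slope and through the
intercept. The factor `s⁻¹` is absorbed by the spare power of `μ`, since `2 s log μ ≤ μ ^ (2 s)`.
-/

open intervalIntegral Real Set MeasureTheory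

theorem integral_sq_linear (a b p q : ℝ) :
    ∫ t in p..q, (a * t + b) ^ 2
      = a ^ 2 * (q ^ 3 - p ^ 3) / 3 + a * b * (q ^ 2 - p ^ 2) + b ^ 2 * (q - p) := by
  have hderiv : ∀ t ∈ uIcc p q,
      HasDerivAt (fun t => a ^ 2 * t ^ 3 / 3 + a * b * t ^ 2 + b ^ 2 * t) ((a * t + b) ^ 2) t := by
    intro t _
    refine ((((hasDerivAt_pow 3 t).const_mul (a ^ 2)).div_const 3).add
      ((hasDerivAt_pow 2 t).const_mul (a * b))).add ((hasDerivAt_id' t).const_mul (b ^ 2))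
      |>.congr_deriv ?_
    push_cast; ring
  rw [integral_eq_sub_of_hasDerivAt hderiv
    ((by fun_prop : Continuous fun t : ℝ => (a * t + b) ^ 2).intervalIntegrable p q)]
  ring

theorem slope_sq_mul_le_integral_sq_linear (a b : ℝ) {p q : ℝ} (hpq : p ≤ q) :
    a ^ 2 * (q - p) ^ 3 / 12 ≤ ∫ t in p..q, (a * t + b) ^ 2 := by
  rw [integral_sq_linear]
  nlinarith [mul_nonneg (sub_nonneg.2 hpq) (sq_nonneg (2 * b + a * (p + q)))]

theorem intercept_sq_mul_le_integral_sq_linear (a b : ℝ) {p M : ℝ} (hp : 0 ≤ p) (hM : 1 ≤ M) :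
    b ^ 2 * p * ((M - 1) ^ 3 / (4 * (M ^ 2 + M + 1))) ≤ ∫ t in p..M * p, (a * t + b) ^ 2 := by
  have hN : 0 < 4 * (M ^ 2 + M + 1) := by positivity
  -- completing the square in `a p`
  have key : 4 * (M ^ 2 + M + 1) * ∫ t in p..M * p, (a * t + b) ^ 2
      = (M - 1) ^ 3 * p * b ^ 2
        + (M - 1) * p * (2 * (M ^ 2 + M + 1) * a * p + 3 * (M + 1) * b) ^ 2 / 3 := by
    rw [integral_sq_linear]; ring
  rw [mul_div_assoc', div_le_iff₀ hN, mul_comm _ (4 * _), key]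
  have hsquare : 0 ≤ (M - 1) * p * (2 * (M ^ 2 + M + 1) * a * p + 3 * (M + 1) * b) ^ 2 / 3 := by
    have := sub_nonneg.2 hM
    positivity
  linarith

theorem rpow_mul_integral_le_integral_mul_rpow {f : ℝ → ℝ} {p q' q e : ℝ} (hp : 0 < p)
    (hpq' : p ≤ q') (hq'q : q' ≤ q) (he : e ≤ 0) (hf : ContinuousOn f (Icc p q))
    (hf0 : ∀ t ∈ Icc p q, 0 ≤ f t) :
    q' ^ e * ∫ t in p..q', f t ≤ ∫ t in p..q, f t * t ^ e := by
  have hcont : ContinuousOn (fun t => f t * t ^ e) (Icc p q) :=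
    hf.mul (continuousOn_id.rpow_const fun t ht => Or.inl (hp.trans_le ht.1).ne')
  have hsub : Icc p q' ⊆ Icc p q := Icc_subset_Icc_right hq'q
  rw [← intervalIntegral.integral_const_mul]
  calc ∫ t in p..q', q' ^ e * f t ≤ ∫ t in p..q', f t * t ^ e := by
        refine integral_mono_on hpq' ?_ ?_ fun t ht => ?_
        · exact ((continuousOn_const.mul hf).mono hsub).intervalIntegrable_of_Icc hpq'
        · exact (hcont.mono hsub).intervalIntegrable_of_Icc hpq'
        rw [mul_comm]
        exact mul_le_mul_of_nonneg_left (rpow_le_rpow_of_nonpos (hp.trans_le ht.1) ht.2 he)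
          (hf0 t (hsub ht))
    _ ≤ ∫ t in p..q, f t * t ^ e :=
        integral_mono_interval le_rfl hpq' hq'q
          (ae_restrict_of_forall_mem measurableSet_Ioc fun t ht =>
            mul_nonneg (hf0 t (Ioc_subset_Icc_self ht)) (rpow_nonneg (hp.trans ht.1).le e))
          (hcont.intervalIntegrable_of_Icc (hpq'.trans hq'q))

theorem integral_comp_rpow_mul_rpow_sub_one (g : ℝ → ℝ) {R S s : ℝ} (hR : 0 ≤ R) (hS : 0 ≤ S)
    (hs : 0 < s) :
    ∫ r in R..S, g (r ^ s) * r ^ (s - 1) = s⁻¹ * ∫ t in R ^ s..S ^ s, g t := by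
  have hpos : ∀ x ∈ Ioo (min R S) (max R S), 0 < x := fun x hx => (le_min hR hS).trans_lt hx.1
  rw [← integral_comp_mul_deriv_of_deriv_nonneg (f := fun r => r ^ s)
    (f' := fun r => s * r ^ (s - 1))
    (continuous_id.rpow_const fun _ => Or.inr hs.le).continuousOn
    (fun x hx => hasDerivAt_rpow_const (Or.inl (hpos x hx).ne'))
    (fun x hx => by have := hpos x hx; positivity), ← intervalIntegral.integral_const_mul]
  congr 1; ext r
  simp only [Function.comp]
  field_simp

theorem mul_log_le_rpow {μ : ℝ} (hμ : 0 < μ) (x : ℝ) : x * log μ ≤ μ ^ x := by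
  rw [rpow_def_of_pos hμ, mul_comm]
  linarith [add_one_le_exp (log μ * x)]

theorem integral_radial_sq_eq (a b : ℝ) {γp γm d R S : ℝ} (hR : 0 < R) (hS : 0 < S)
    (hs : 0 < γp + γm) (hγ : γm - γp = d - 2) :
    ∫ r in R..S, (a * r ^ γp + b * r ^ (-γm)) ^ 2 * r ^ (d - 1)
      = (γp + γm)⁻¹ *
        ∫ t in R ^ (γp + γm)..S ^ (γp + γm), (a * t + b) ^ 2 * t ^ (2 / (γp + γm) - 2) := by
  set s := γp + γm
  rw [← integral_comp_rpow_mul_rpow_sub_one _ hR.le hS.le hs]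
  refine integral_congr fun r hr => ?_
  have hr : 0 < r := (lt_min hR hS).trans_le hr.1
  have hsplit : r ^ γp = r ^ s * r ^ (-γm) := by rw [← rpow_add hr]; congr 1; linarith
  have hleft : (r ^ (-γm)) ^ 2 * r ^ (d - 1) = r ^ (1 - s) := by
    rw [← rpow_natCast, ← rpow_mul hr.le, ← rpow_add hr]; congr 1; push_cast; linarith
  have hright : (r ^ s) ^ (2 / s - 2) * r ^ (s - 1) = r ^ (1 - s) := by
    rw [← rpow_mul hr.le, ← rpow_add hr]; congr 1; field_simp; ring
  calc (a * r ^ γp + b * r ^ (-γm)) ^ 2 * r ^ (d - 1)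
      = (a * r ^ s + b) ^ 2 * ((r ^ (-γm)) ^ 2 * r ^ (d - 1)) := by rw [hsplit]; ring
    _ = (a * r ^ s + b) ^ 2 * (r ^ s) ^ (2 / s - 2) * r ^ (s - 1) := by
      rw [hleft, ← hright]; ring

theorem slope_sq_le_weighted_integral (a b : ℝ) {p q e : ℝ} (hp : 0 < p) (hpq : p ≤ q)
    (he : e ≤ 0) :
    a ^ 2 * q ^ (e + 3) * (1 - p / q) ^ 3 / 12 ≤ ∫ t in p..q, (a * t + b) ^ 2 * t ^ e := by
  have hq : 0 < q := hp.trans_le hpq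
  calc a ^ 2 * q ^ (e + 3) * (1 - p / q) ^ 3 / 12 = q ^ e * (a ^ 2 * (q - p) ^ 3 / 12) := by
        rw [rpow_add hq, rpow_ofNat]; field_simp
    _ ≤ q ^ e * ∫ t in p..q, (a * t + b) ^ 2 := by
        gcongr; exact slope_sq_mul_le_integral_sq_linear a b hpq
    _ ≤ ∫ t in p..q, (a * t + b) ^ 2 * t ^ e :=
        rpow_mul_integral_le_integral_mul_rpow hp hpq le_rfl he (by fun_prop)
          fun _ _ => sq_nonneg _

theorem intercept_sq_le_weighted_integral (a b : ℝ) {p q e M : ℝ} (hp : 0 < p) (hM : 1 ≤ M)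
    (hMq : M * p ≤ q) (he₂ : -2 ≤ e) (he : e ≤ 0) :
    b ^ 2 * p ^ (e + 1) * ((M - 1) ^ 3 / (4 * M ^ 2 * (M ^ 2 + M + 1)))
      ≤ ∫ t in p..q, (a * t + b) ^ 2 * t ^ e := by
  have hM0 : 0 < M := one_pos.trans_le hM
  have hweight : (M ^ 2)⁻¹ ≤ M ^ e := by
    rw [← rpow_ofNat, ← rpow_neg hM0.le]; exact rpow_le_rpow_of_exponent_le hM he₂
  calc b ^ 2 * p ^ (e + 1) * ((M - 1) ^ 3 / (4 * M ^ 2 * (M ^ 2 + M + 1)))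
      = (M ^ 2)⁻¹ * p ^ e * (b ^ 2 * p * ((M - 1) ^ 3 / (4 * (M ^ 2 + M + 1)))) := by
        rw [rpow_add_one hp.ne']; field_simp
    _ ≤ (M * p) ^ e * (b ^ 2 * p * ((M - 1) ^ 3 / (4 * (M ^ 2 + M + 1)))) := by
        rw [mul_rpow hM0.le hp.le]
        have : 0 ≤ M - 1 := sub_nonneg.2 hM
        gcongr
    _ ≤ (M * p) ^ e * ∫ t in p..M * p, (a * t + b) ^ 2 := by
        gcongr; exact intercept_sq_mul_le_integral_sq_linear a b hp.le hM
    _ ≤ ∫ t in p..q, (a * t + b) ^ 2 * t ^ e :=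
        rpow_mul_integral_le_integral_mul_rpow hp (le_mul_of_one_le_left hp.le hM) hMq he
          (by fun_prop) fun _ _ => sq_nonneg _

theorem exists_growing_coeff_bound {μ : ℝ} (hμ : 1 < μ) :
    ∃ C > 0, ∀ a b γp γm d R : ℝ, 2 ≤ d → 1 ≤ γp + γm → γm - γp = d - 2 → 0 < R →
      a ^ 2 * R ^ (2 * γp) ≤ C * μ ^ (-(2 * γp)) * R ^ (-d) *
        ∫ r in R..(μ ^ 3 * R), (a * r ^ γp + b * r ^ (-γm)) ^ 2 * r ^ (d - 1) := by
  set M := μ ^ 3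
  have hμ0 : 0 < μ := one_pos.trans hμ
  have hM : 1 < M := one_lt_pow₀ hμ (by norm_num)
  have hM0 : 0 < M := one_pos.trans hM
  have hκ : 0 < 1 - M⁻¹ := sub_pos.2 (inv_lt_one_of_one_lt₀ hM)
  have hlog : 0 < log μ := log_pos hμ
  set K := M ^ 2 * (1 - M⁻¹) ^ 3 / 12
  have hK : 0 < K := by positivity
  refine ⟨(2 * log μ * K)⁻¹, by positivity, ?_⟩
  intro a b γp γm d R hd hs hγ hR
  set s := γp + γm
  have hs0 : 0 < s := one_pos.trans_le hs
  set p := R ^ s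
  set q := (M * R) ^ s
  have hp : 0 < p := rpow_pos_of_pos hR s
  have hMs : M ≤ M ^ s := self_le_rpow_of_one_le hM.le hs
  have hq : q = M ^ s * p := mul_rpow hM0.le hR.le
  have hpq : p ≤ q := by rw [hq]; exact le_mul_of_one_le_left hp.le (hM.le.trans hMs)
  have hratio : 1 - M⁻¹ ≤ 1 - p / q := by
    rw [hq, div_mul_cancel_right₀ hp.ne']
    linarith [inv_anti₀ hM0 hMs]
  have hq3 : q ^ (2 / s - 2 + 3) = M ^ s * M ^ 2 * R ^ (s + 2) := by
    rw [← rpow_mul (by positivity), mul_rpow hM0.le hR.le,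
      show s * (2 / s - 2 + 3) = s + 2 by field_simp; ring, rpow_add hM0, rpow_two]
  have hRd : R ^ (-d) * R ^ (s + 2) = R ^ (2 * γp) := by
    rw [← rpow_add hR]; congr 1; linarith
  have hμs : 2 * s * log μ ≤ μ ^ (-(2 * γp)) * M ^ s := by
    rw [← rpow_natCast_mul hμ0.le, ← rpow_add hμ0]
    calc 2 * s * log μ ≤ μ ^ (2 * s) := mul_log_le_rpow hμ0 _
      _ ≤ _ := rpow_le_rpow_of_exponent_le hμ.le (by push_cast; linarith)
  rw [integral_radial_sq_eq a b hR (by positivity) hs0 hγ]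
  have hJ := slope_sq_le_weighted_integral a b hp hpq (e := 2 / s - 2)
    (by rw [sub_nonpos, div_le_iff₀ hs0]; linarith)
  calc a ^ 2 * R ^ (2 * γp)
      = (2 * log μ * K)⁻¹ * (s⁻¹ * (2 * s * log μ) * K * a ^ 2 * R ^ (2 * γp)) := by
        field_simp
    _ ≤ (2 * log μ * K)⁻¹ * (s⁻¹ * (μ ^ (-(2 * γp)) * M ^ s) * K * a ^ 2 * R ^ (2 * γp)) := by
        gcongr
    _ = (2 * log μ * K)⁻¹ * μ ^ (-(2 * γp)) * R ^ (-d) *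
          (s⁻¹ * (a ^ 2 * q ^ (2 / s - 2 + 3) * (1 - M⁻¹) ^ 3 / 12)) := by
        rw [hq3, ← hRd]; ring
    _ ≤ (2 * log μ * K)⁻¹ * μ ^ (-(2 * γp)) * R ^ (-d) *
          (s⁻¹ * (a ^ 2 * q ^ (2 / s - 2 + 3) * (1 - p / q) ^ 3 / 12)) := by gcongr
    _ ≤ _ := by gcongr

theorem exists_decaying_coeff_bound {μ : ℝ} (hμ : 1 < μ) :
    ∃ C > 0, ∀ a b γp γm d R : ℝ, 2 ≤ d → 1 ≤ γp + γm → γm - γp = d - 2 → 0 < R →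
      b ^ 2 * R ^ (-(2 * γm)) ≤ C * μ ^ (4 * γm) * R ^ (-d) *
        ∫ r in R..(μ ^ 3 * R), (a * r ^ γp + b * r ^ (-γm)) ^ 2 * r ^ (d - 1) := by
  set M := μ ^ 3
  have hμ0 : 0 < μ := one_pos.trans hμ
  have hM : 1 < M := one_lt_pow₀ hμ (by norm_num)
  have hM0 : 0 < M := one_pos.trans hM
  have hlog : 0 < log μ := log_pos hμ
  set K := (M - 1) ^ 3 / (4 * M ^ 2 * (M ^ 2 + M + 1))
  have hK : 0 < K := by have := sub_pos.2 hM; positivity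
  refine ⟨(2 * log μ * K)⁻¹, by positivity, ?_⟩
  intro a b γp γm d R hd hs hγ hR
  set s := γp + γm
  have hs0 : 0 < s := one_pos.trans_le hs
  rw [integral_radial_sq_eq a b hR (by positivity) hs0 hγ]
  set p := R ^ s
  have hp : 0 < p := rpow_pos_of_pos hR s
  have hMq : M * p ≤ (M * R) ^ s := by
    rw [mul_rpow hM0.le hR.le]; gcongr; exact self_le_rpow_of_one_le hM.le hs
  have hJ := intercept_sq_le_weighted_integral a b hp hM.le hMq (e := 2 / s - 2)
    (by linarith [div_pos two_pos hs0]) (by rw [sub_nonpos, div_le_iff₀ hs0]; linarith)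
  have hp1 : p ^ (2 / s - 2 + 1) = R ^ (2 - s) := by
    rw [← rpow_mul hR.le]; congr 1; field_simp; ring
  have hRd : R ^ (-d) * R ^ (2 - s) = R ^ (-(2 * γm)) := by
    rw [← rpow_add hR]; congr 1; linarith
  have hμs : 2 * s * log μ ≤ μ ^ (4 * γm) :=
    (mul_log_le_rpow hμ0 _).trans (rpow_le_rpow_of_exponent_le hμ.le (by linarith))
  calc b ^ 2 * R ^ (-(2 * γm))
      = (2 * log μ * K)⁻¹ * (s⁻¹ * (2 * s * log μ) * K * b ^ 2 * R ^ (-(2 * γm))) := by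
        field_simp
    _ ≤ (2 * log μ * K)⁻¹ * (s⁻¹ * μ ^ (4 * γm) * K * b ^ 2 * R ^ (-(2 * γm))) := by
        gcongr
    _ = (2 * log μ * K)⁻¹ * μ ^ (4 * γm) * R ^ (-d) *
          (s⁻¹ * (b ^ 2 * p ^ (2 / s - 2 + 1) * K)) := by
        rw [hp1, ← hRd]; ring
    _ ≤ _ := by gcongr

/-- For `u(r) = a r^{γ⁺} + b r^{−γ⁻}` with `γ⁺,γ⁻ ≥ 0`, `γ⁺+γ⁻ ≥ 1`,
`γ⁻−γ⁺ = d−2`, and any `μ > 1`, there is `C = C(μ,d)` (uniform in `γ⁺,γ⁻,a,b,R`) with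
`|a|² R^{2γ⁺} ≤ C μ^{−2γ⁺} R^{−d} ∫_R^{μ³R} u² r^{d−1} dr` and
`|b|² R^{−2γ⁻} ≤ C μ^{4γ⁻} R^{−d} ∫_R^{μ³R} u² r^{d−1} dr`. -/
theorem stmt1 (d : ℕ) (hd : 2 ≤ d) (μ : ℝ) (hμ : 1 < μ) :
    ∃ C > 0, ∀ a b γp γm : ℝ, 0 ≤ γp → 0 ≤ γm → 1 ≤ γp + γm → γm - γp = (d : ℝ) - 2 →
      ∀ R : ℝ, 0 < R →
        a ^ 2 * R ^ (2 * γp)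
            ≤ C * μ ^ (-(2 * γp)) * R ^ (-(d : ℝ)) *
              ∫ r in R..(μ ^ 3 * R), (a * r ^ γp + b * r ^ (-γm)) ^ 2 * r ^ ((d : ℝ) - 1) ∧
        b ^ 2 * R ^ (-(2 * γm))
            ≤ C * μ ^ (4 * γm) * R ^ (-(d : ℝ)) *
              ∫ r in R..(μ ^ 3 * R), (a * r ^ γp + b * r ^ (-γm)) ^ 2 * r ^ ((d : ℝ) - 1) := by
  obtain ⟨C₁, hC₁, hgrowing⟩ := exists_growing_coeff_bound hμ
  obtain ⟨C₂, hC₂, hdecaying⟩ := exists_decaying_coeff_bound hμ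
  refine ⟨C₁ + C₂, by positivity, fun a b γp γm _ _ hs hγ R hR => ?_⟩
  have hd' : (2 : ℝ) ≤ d := by exact_mod_cast hd
  have hI : 0 ≤ ∫ r in R..(μ ^ 3 * R), (a * r ^ γp + b * r ^ (-γm)) ^ 2 * r ^ ((d : ℝ) - 1) :=
    integral_nonneg (le_mul_of_one_le_left hR.le (one_le_pow₀ hμ.le)) fun r hr =>
      mul_nonneg (sq_nonneg _) (rpow_nonneg (hR.le.trans hr.1) _)
  constructor
  · calc _ ≤ _ := hgrowing a b γp γm d R hd' hs hγ hR
      _ ≤ _ := by gcongr; linarith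
  · calc _ ≤ _ := hdecaying a b γp γm d R hd' hs hγ hR
      _ ≤ _ := by gcongr; linarith
end

section
/- Let u_ρ, u : ℝ³ \ B_1 → ℝ³ be maps with asymptotic expansions u_ρ(x) = n_ρ + v_ρ/|x| + w_ρ(x) and u(x) = n + v/|x| + w(x), where n_ρ, n, v_ρ, v ∈ ℝ³ are constants and the remainders satisfy |∇w(x)| ≤ K·ln³|x|/|x|³ and |∇w_ρ(x)| ≤ K·(ln³|x|/|x|³ + √ρ/|x|) on λ₀ ≤ |x| ≤ Λ. Then for every λ with λ₀ ≤ λ and 2λ ≤ Λ: |v_ρ − v|²/λ ≤ C·( ∫_{B_{2λ}\B_λ} |∇u_ρ − ∇u|² dx + ln⁶(2λ)/λ³ + λ·ρ ), with C depending only on K. -/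
noncomputable section

open MeasureTheory Metric

abbrev E3 : Type := EuclideanSpace ℝ (Fin 3)

/-!
On the open annulus `λ < ‖x‖ < 2λ` the constants drop out of the two expansions and
`∇u_ρ - ∇u = ∇((v_ρ - v)/‖x‖) + (∇w_ρ - ∇w)`, where `‖∇(c/‖x‖)‖ = ‖c‖/‖x‖² ≥ ‖c‖/(4λ²)` and the
remainders are `O(K (ln³(2λ)/λ³ + √ρ/λ))`. Squaring and integrating over the annulus, whose volume
is `7λ³ |B₁|`, gives `‖v_ρ - v‖²/λ` up to the energy and the squared remainders. The closed
annulus of the statement differs from the open one by two null spheres.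
-/

open Topology Module

section InverseNorm

variable {E F : Type*} [NormedAddCommGroup E] [InnerProductSpace ℝ E]
  [NormedAddCommGroup F] [NormedSpace ℝ F] {x : E}

theorem hasFDerivAt_inv_norm (hx : x ≠ 0) :
    HasFDerivAt (fun y : E => ‖y‖⁻¹) (-(‖x‖ ^ 2)⁻¹ • fderiv ℝ (‖·‖) x) x :=
  (hasDerivAt_inv (norm_ne_zero_iff.mpr hx)).comp_hasFDerivAt x
    ((contDiffAt_norm ℝ hx).differentiableAt one_ne_zero).hasFDerivAt

theorem norm_fderiv_inv_norm (hx : x ≠ 0) :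
    ‖fderiv ℝ (fun y : E => ‖y‖⁻¹) x‖ = (‖x‖ ^ 2)⁻¹ := by
  have : Nontrivial E := ⟨⟨x, 0, hx⟩⟩
  rw [(hasFDerivAt_inv_norm hx).fderiv, norm_smul,
    norm_fderiv_norm ((contDiffAt_norm ℝ hx).differentiableAt one_ne_zero)]
  simp

theorem fderiv_eq_of_eventuallyEq_add_inv_norm_smul {f g : E → F} {a v : F} (hx : x ≠ 0)
    (hg : DifferentiableAt ℝ g x) (hf : f =ᶠ[𝓝 x] fun y => a + ‖y‖⁻¹ • v + g y) :
    fderiv ℝ f x = (fderiv ℝ (fun y : E => ‖y‖⁻¹) x).smulRight v + fderiv ℝ g x := by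
  have hinv := hasFDerivAt_inv_norm hx
  rw [hf.fderiv_eq, hinv.fderiv]
  exact (((hasFDerivAt_const a x).add (hinv.smul_const v)).add hg.hasFDerivAt).fderiv.trans
    (by rw [zero_add])

theorem abs_norm_fderiv_sub_sub_le {f₁ f₂ g₁ g₂ : E → F} {a₁ a₂ v₁ v₂ : F} (hx : x ≠ 0)
    (hg₁ : DifferentiableAt ℝ g₁ x) (hg₂ : DifferentiableAt ℝ g₂ x)
    (hf₁ : f₁ =ᶠ[𝓝 x] fun y => a₁ + ‖y‖⁻¹ • v₁ + g₁ y)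
    (hf₂ : f₂ =ᶠ[𝓝 x] fun y => a₂ + ‖y‖⁻¹ • v₂ + g₂ y) :
    |‖fderiv ℝ f₁ x - fderiv ℝ f₂ x‖ - ‖v₁ - v₂‖ / ‖x‖ ^ 2|
      ≤ ‖fderiv ℝ g₁ x‖ + ‖fderiv ℝ g₂ x‖ := by
  have hdiff : fderiv ℝ f₁ x - fderiv ℝ f₂ x
      = (fderiv ℝ (fun y : E => ‖y‖⁻¹) x).smulRight (v₁ - v₂)
        + (fderiv ℝ g₁ x - fderiv ℝ g₂ x) := by
    rw [fderiv_eq_of_eventuallyEq_add_inv_norm_smul hx hg₁ hf₁,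
      fderiv_eq_of_eventuallyEq_add_inv_norm_smul hx hg₂ hf₂]
    ext
    simp only [add_apply, sub_apply, ContinuousLinearMap.smulRight_apply, smul_sub]
    abel
  have hnorm : ‖(fderiv ℝ (fun y : E => ‖y‖⁻¹) x).smulRight (v₁ - v₂)‖ = ‖v₁ - v₂‖ / ‖x‖ ^ 2 := by
    rw [ContinuousLinearMap.norm_smulRight_apply, norm_fderiv_inv_norm hx, inv_mul_eq_div]
  rw [hdiff, ← hnorm]
  exact ((abs_norm_sub_norm_le _ _).trans_eq (by rw [add_sub_cancel_left])).trans (norm_sub_le _ _)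

end InverseNorm

section Annulus

variable {E : Type*} [NormedAddCommGroup E] [NormedSpace ℝ E] [MeasurableSpace E] [BorelSpace E]
  [FiniteDimensional ℝ E] [Nontrivial E] (μ : Measure E) [μ.IsAddHaarMeasure]

theorem ball_ae_eq_closedBall (x : E) (r : ℝ) : ball x r =ᵐ[μ] closedBall x r :=
  ae_eq_of_subset_of_measure_ge ball_subset_closedBall
    (Measure.addHaar_closedBall_eq_addHaar_ball μ x r).le measurableSet_ball.nullMeasurableSet
    measure_closedBall_lt_top.ne

theorem setOf_le_norm_le_ae_eq (r R : ℝ) :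
    {y : E | r ≤ ‖y‖ ∧ ‖y‖ ≤ R} =ᵐ[μ] ball 0 R \ closedBall 0 r := by
  have hset : {y : E | r ≤ ‖y‖ ∧ ‖y‖ ≤ R} = closedBall 0 R \ ball 0 r := by
    ext y
    simp [and_comm]
  rw [hset]
  exact (ball_ae_eq_closedBall μ 0 R).symm.diff (ball_ae_eq_closedBall μ 0 r)

theorem measureReal_ball_sdiff_closedBall (x : E) {r R : ℝ} (hr : 0 ≤ r) (hrR : r < R) :
    μ.real (ball x R \ closedBall x r)
      = (R ^ finrank ℝ E - r ^ finrank ℝ E) * μ.real (ball (0 : E) 1) := by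
  rw [measureReal_sdiff (closedBall_subset_ball hrR) measurableSet_closedBall
      measure_ball_lt_top.ne, ← Measure.addHaar_real_closedBall_eq_addHaar_real_ball,
    Measure.addHaar_real_closedBall μ x (hr.trans hrR.le), Measure.addHaar_real_closedBall μ x hr]
  ring

end Annulus

theorem sq_bounds_of_abs_sub_div_sq_le {a g lam r R : ℝ} (ha : 0 ≤ a) (hlam : 0 < lam)
    (hr : lam < r) (hr2 : r < 2 * lam) (h : |g - a / r ^ 2| ≤ R) :
    a ^ 2 / (32 * lam ^ 4) - R ^ 2 ≤ g ^ 2 ∧ g ^ 2 ≤ (a / lam ^ 2 + R) ^ 2 := by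
  have hr0 : 0 < r := hlam.trans hr
  have h1 : a / (4 * lam ^ 2) ≤ a / r ^ 2 :=
    div_le_div_of_nonneg_left ha (by positivity) (by nlinarith)
  have h2 : a / r ^ 2 ≤ a / lam ^ 2 := div_le_div_of_nonneg_left ha (by positivity) (by nlinarith)
  have h0 : 0 ≤ a / (4 * lam ^ 2) := by positivity
  obtain ⟨hlo, hhi⟩ := abs_le.mp h
  have hsq : a ^ 2 / (32 * lam ^ 4) = (a / (4 * lam ^ 2)) ^ 2 / 2 := by field_simp; ring
  constructor
  · nlinarith [sq_nonneg (g + R), sq_nonneg (g - R)]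
  · exact sq_le_sq' (by linarith) (by linarith)

theorem sq_div_le_setIntegral_annulus {g : E3 → ℝ} (hg : Measurable g) {a lam R : ℝ}
    (ha : 0 ≤ a) (hlam : 0 < lam)
    (h : ∀ x : E3, lam < ‖x‖ → ‖x‖ < 2 * lam → |g x - a / ‖x‖ ^ 2| ≤ R) :
    a ^ 2 / lam ≤ 32 / (7 * volume.real (ball (0 : E3) 1))
        * (∫ x in {x : E3 | lam ≤ ‖x‖ ∧ ‖x‖ ≤ 2 * lam}, g x ^ 2) + 32 * lam ^ 3 * R ^ 2 := by
  rw [setIntegral_congr_set (setOf_le_norm_le_ae_eq volume lam (2 * lam))]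
  set V := volume.real (ball (0 : E3) 1)
  set A := ball (0 : E3) (2 * lam) \ closedBall 0 lam
  have hV : 0 < V :=
    ENNReal.toReal_pos (measure_ball_pos volume 0 one_pos).ne' measure_ball_lt_top.ne
  have hvol : volume.real A = 7 * lam ^ 3 * V := by
    rw [measureReal_ball_sdiff_closedBall volume 0 hlam.le (by linarith),
      finrank_euclideanSpace_fin]
    ring
  have hA : MeasurableSet A := measurableSet_ball.diff measurableSet_closedBall
  have hAfin : volume A ≠ ⊤ := measure_ne_top_of_subset Set.sdiff_subset measure_ball_lt_top.ne
  have hbounds : ∀ x ∈ A,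
      a ^ 2 / (32 * lam ^ 4) - R ^ 2 ≤ g x ^ 2 ∧ g x ^ 2 ≤ (a / lam ^ 2 + R) ^ 2 :=
    fun x hx => by
      obtain ⟨hlo, hhi⟩ : lam < ‖x‖ ∧ ‖x‖ < 2 * lam := by simpa [A, and_comm] using hx
      exact sq_bounds_of_abs_sub_div_sq_le ha hlam hlo hhi (h x hlo hhi)
  have hint : IntegrableOn (fun x => g x ^ 2) A :=
    Measure.integrableOn_of_bounded hAfin (hg.pow_const 2).aestronglyMeasurable
      ((ae_restrict_iff' hA).mpr (.of_forall fun x hx => by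
        rw [Real.norm_eq_abs, abs_of_nonneg (sq_nonneg _)]
        exact (hbounds x hx).2))
  have hI := setIntegral_ge_of_const_le_real hA hAfin (fun x hx => (hbounds x hx).1) hint
  rw [hvol] at hI
  have hscale : a ^ 2 / lam - 32 * lam ^ 3 * R ^ 2
      = 32 / (7 * V) * ((a ^ 2 / (32 * lam ^ 4) - R ^ 2) * (7 * lam ^ 3 * V)) := by
    field_simp
  have := mul_le_mul_of_nonneg_left hI (by positivity : (0:ℝ) ≤ 32 / (7 * V))
  change _ ≤ 32 / (7 * V) * (∫ x in A, g x ^ 2) + _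
  linarith

theorem log_pow_div_pow_le_of_mem_Icc {lam r : ℝ} (n m : ℕ) (hlam : 1 ≤ lam) (hr : lam ≤ r)
    (hr2 : r ≤ 2 * lam) : Real.log r ^ n / r ^ m ≤ Real.log (2 * lam) ^ n / lam ^ m := by
  have hlog : 0 ≤ Real.log r := Real.log_nonneg (by linarith)
  have hlog2 : Real.log r ≤ Real.log (2 * lam) := Real.log_le_log (by linarith) hr2
  exact div_le_div₀ (pow_nonneg (hlog.trans hlog2) n) (pow_le_pow_left₀ hlog hlog2 n)
    (by positivity) (pow_le_pow_left₀ (by linarith) hr m)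

theorem add_le_of_log_cube_bounds {K ρ lam r p q : ℝ} (hK : 0 ≤ K) (hlam : 1 ≤ lam)
    (hr : lam ≤ r) (hr2 : r ≤ 2 * lam)
    (hp : p ≤ K * (Real.log r ^ 3 / r ^ 3 + Real.sqrt ρ / r))
    (hq : q ≤ K * Real.log r ^ 3 / r ^ 3) :
    p + q ≤ K * (2 * Real.log (2 * lam) ^ 3 / lam ^ 3 + Real.sqrt ρ / lam) := by
  have hlog := log_pow_div_pow_le_of_mem_Icc 3 3 hlam hr hr2
  have hsqrt : Real.sqrt ρ / r ≤ Real.sqrt ρ / lam := by gcongr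
  rw [mul_div_assoc] at hq
  calc p + q ≤ K * (Real.log r ^ 3 / r ^ 3 + Real.sqrt ρ / r) + K * (Real.log r ^ 3 / r ^ 3) :=
        add_le_add hp hq
    _ ≤ K * (Real.log (2 * lam) ^ 3 / lam ^ 3 + Real.sqrt ρ / lam)
          + K * (Real.log (2 * lam) ^ 3 / lam ^ 3) := by gcongr
    _ = K * (2 * Real.log (2 * lam) ^ 3 / lam ^ 3 + Real.sqrt ρ / lam) := by ring

theorem pow_three_mul_sq_le (K : ℝ) {lam ρ M : ℝ} (hlam : 0 < lam) (hρ : 0 ≤ ρ) :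
    32 * lam ^ 3 * (K * (2 * M / lam ^ 3 + Real.sqrt ρ / lam)) ^ 2
      ≤ 256 * K ^ 2 * (M ^ 2 / lam ^ 3) + 64 * K ^ 2 * (lam * ρ) := by
  calc 32 * lam ^ 3 * (K * (2 * M / lam ^ 3 + Real.sqrt ρ / lam)) ^ 2
      = 32 * K ^ 2 * lam ^ 3 * (2 * M / lam ^ 3 + Real.sqrt ρ / lam) ^ 2 := by ring
    _ ≤ 32 * K ^ 2 * lam ^ 3 * (2 * (2 * M / lam ^ 3) ^ 2 + 2 * (Real.sqrt ρ / lam) ^ 2) := by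
        gcongr
        nlinarith [sq_nonneg (2 * M / lam ^ 3 - Real.sqrt ρ / lam)]
    _ = 256 * K ^ 2 * (M ^ 2 / lam ^ 3) + 64 * K ^ 2 * (lam * ρ) := by
      rw [div_pow (Real.sqrt ρ), Real.sq_sqrt hρ]
      field_simp
      ring

/-- let `u_ρ, u : ℝ³ \ B_1 → ℝ³` have the far-field expansions
`u_ρ = n_ρ + v_ρ/|x| + w_ρ` and `u = n + v/|x| + w` with remainder gradient bounds
`|∇w| ≤ K ln³|x|/|x|³` and `|∇w_ρ| ≤ K (ln³|x|/|x|³ + √ρ/|x|)` on `λ₀ ≤ |x| ≤ Λ`.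
Then for every `λ` with `λ₀ ≤ λ`, `2λ ≤ Λ`:
`|v_ρ − v|²/λ ≤ C ( ∫_{B_{2λ}\B_λ} |∇u_ρ − ∇u|² + ln⁶(2λ)/λ³ + λρ )`,
with `C` depending only on `K`. -/
theorem stmt19 (K : ℝ) (hK : 0 ≤ K) :
    ∃ C > 0, ∀ (ρ lam₀ Λ : ℝ) (uρ u wρ w : E3 → E3) (nρ n vρ v : E3),
      0 < ρ → 1 ≤ lam₀ →
      (∀ x : E3, lam₀ ≤ ‖x‖ → ‖x‖ ≤ Λ →
        (uρ x = nρ + ‖x‖⁻¹ • vρ + wρ x ∧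
          u x = n + ‖x‖⁻¹ • v + w x ∧
          DifferentiableAt ℝ uρ x ∧ DifferentiableAt ℝ u x ∧
          DifferentiableAt ℝ wρ x ∧ DifferentiableAt ℝ w x ∧
          ‖fderiv ℝ w x‖ ≤ K * Real.log ‖x‖ ^ 3 / ‖x‖ ^ 3 ∧
          ‖fderiv ℝ wρ x‖
            ≤ K * (Real.log ‖x‖ ^ 3 / ‖x‖ ^ 3 + Real.sqrt ρ / ‖x‖))) →
      ∀ lam : ℝ, lam₀ ≤ lam → 2 * lam ≤ Λ →
        ‖vρ - v‖ ^ 2 / lam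
          ≤ C * ((∫ x in {x : E3 | lam ≤ ‖x‖ ∧ ‖x‖ ≤ 2 * lam},
                ‖fderiv ℝ uρ x - fderiv ℝ u x‖ ^ 2)
              + Real.log (2 * lam) ^ 6 / lam ^ 3 + lam * ρ) := by
  set V := volume.real (ball (0 : E3) 1)
  refine ⟨32 / (7 * V) + 256 * K ^ 2 + 1, by positivity, ?_⟩
  intro ρ lam₀ Λ uρ u wρ w nρ n vρ v hρ hlam₀ hexp lam hlam hΛ
  have hlam1 : 1 ≤ lam := hlam₀.trans hlam
  have hlam0 : 0 < lam := by linarith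
  have hpt : ∀ x : E3, lam < ‖x‖ → ‖x‖ < 2 * lam →
      |‖fderiv ℝ uρ x - fderiv ℝ u x‖ - ‖vρ - v‖ / ‖x‖ ^ 2|
        ≤ K * (2 * Real.log (2 * lam) ^ 3 / lam ^ 3 + Real.sqrt ρ / lam) := by
    intro x hlo hhi
    have hnear : ∀ᶠ y in 𝓝 x, lam₀ ≤ ‖y‖ ∧ ‖y‖ ≤ Λ :=
      (continuous_norm.tendsto x).eventually (Ioo_mem_nhds hlo hhi) |>.mono
        fun y hy => ⟨hlam.trans hy.1.le, by linarith [hy.2]⟩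
    obtain ⟨-, -, -, -, hwρ, hw, hDw, hDwρ⟩ := hexp x (by linarith) (by linarith)
    exact (abs_norm_fderiv_sub_sub_le (norm_pos_iff.mp (by linarith)) hwρ hw
      (hnear.mono fun y hy => (hexp y hy.1 hy.2).1)
      (hnear.mono fun y hy => (hexp y hy.1 hy.2).2.1)).trans
      (add_le_of_log_cube_bounds hK hlam1 hlo.le hhi.le hDwρ hDw)
  have hmain := sq_div_le_setIntegral_annulus (g := fun x => ‖fderiv ℝ uρ x - fderiv ℝ u x‖)
    ((measurable_fderiv ℝ uρ).sub (measurable_fderiv ℝ u)).norm (norm_nonneg _) hlam0 hpt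
  have hrem := pow_three_mul_sq_le K (M := Real.log (2 * lam) ^ 3) hlam0 hρ.le
  rw [← pow_mul] at hrem
  have hI : 0 ≤ ∫ x in {x : E3 | lam ≤ ‖x‖ ∧ ‖x‖ ≤ 2 * lam},
      ‖fderiv ℝ uρ x - fderiv ℝ u x‖ ^ 2 := integral_nonneg fun x => sq_nonneg _
  have hlog : 0 ≤ Real.log (2 * lam) ^ 6 / lam ^ 3 := by positivity
  have hlamρ : 0 ≤ lam * ρ := by positivity
  nlinarith [mul_nonneg (sq_nonneg K) hI, mul_nonneg (sq_nonneg K) hlog,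
    mul_nonneg (sq_nonneg K) hlamρ, mul_nonneg (by positivity : (0:ℝ) ≤ 32 / (7 * V)) hlog,
    mul_nonneg (by positivity : (0:ℝ) ≤ 32 / (7 * V)) hlamρ]
end
end
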